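/- Fix p̄ > 0 and Γ ≥ 0. There exists λ_Γ(p̄) > 0, depending only on Γ, p̄, N, and y, such that whenever q lies in the probability simplex of ℝ^r with q_a ≥ p̄ for all a, and 0 < λ < λ_Γ(p̄), the unique minimizer g of Φ_{q,λ} satisfies min_{a} y_a·g_a > Γ. -/

import Mathlib

open Matrix Set

/-- Logistic loss `ℓ(u) = log(1 + e^{−u})`. -/
noncomputable def logLoss (u : ℝ) : ℝ := Real.log (1 + Real.exp (-u))

/-- Finite-template objective
`Φ_{q,λ}(g) = ∑ₐ q_a·ℓ(y_a·g_a) + (λ/2)·gᵀ N⁻¹ g`. -/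
noncomputable def templateObj {r : ℕ} (N : Matrix (Fin r) (Fin r) ℝ)
    (y q : Fin r → ℝ) (lam : ℝ) (g : Fin r → ℝ) : ℝ :=
  ∑ a, q a * logLoss (y a * g a) + (lam / 2) * (g ⬝ᵥ (N⁻¹ *ᵥ g))

/-!
If `g` minimizes `Φ_{q,λ}`, then for each `a`,
`p̄·ℓ(y_a g_a) ≤ Φ_{q,λ}(g) ≤ Φ_{q,λ}(T·y) = ℓ(T) + (λ/2) T² yᵀN⁻¹y`.
Choosing `T` with `ℓ(T) < p̄ ℓ(Γ)/2` and then `λ` so small that the ridge term is below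
`p̄ ℓ(Γ)/2` gives `ℓ(y_a g_a) < ℓ(Γ)`, hence `y_a g_a > Γ` since `ℓ` is strictly decreasing.
-/

open Filter Topology

lemma logLoss_pos (u : ℝ) : 0 < logLoss u :=
  Real.log_pos (by linarith [Real.exp_pos (-u)])

lemma logLoss_strictAnti : StrictAnti logLoss := fun _ _ huv =>
  Real.log_lt_log (by positivity) (by gcongr)

lemma tendsto_logLoss_atTop : Tendsto logLoss atTop (𝓝 0) := by
  have h := (Real.tendsto_exp_neg_atTop_nhds_zero.const_add 1).log (by norm_num)
  rwa [add_zero, Real.log_one] at h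

section TemplateObj

variable {r : ℕ} {N : Matrix (Fin r) (Fin r) ℝ} {y q : Fin r → ℝ} {lam : ℝ}

lemma mul_logLoss_le_templateObj (hq : ∀ b, 0 ≤ q b) (hlam : 0 ≤ lam) (hN : (N⁻¹).PosSemidef)
    (g : Fin r → ℝ) (a : Fin r) : q a * logLoss (y a * g a) ≤ templateObj N y q lam g := by
  have hloss : q a * logLoss (y a * g a) ≤ ∑ b, q b * logLoss (y b * g b) :=
    Finset.single_le_sum (f := fun b => q b * logLoss (y b * g b))
      (fun b _ => mul_nonneg (hq b) (logLoss_pos _).le) (Finset.mem_univ a)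
  have hridge : 0 ≤ lam / 2 * (g ⬝ᵥ (N⁻¹ *ᵥ g)) :=
    mul_nonneg (by positivity) (hN.dotProduct_mulVec_nonneg g)
  unfold templateObj
  linarith

lemma templateObj_smul_labels (hy : ∀ a, y a * y a = 1) (hq : ∑ a, q a = 1) (t : ℝ) :
    templateObj N y q lam (t • y) = logLoss t + lam / 2 * t ^ 2 * (y ⬝ᵥ (N⁻¹ *ᵥ y)) := by
  have hmargin : ∀ a, y a * (t • y) a = t := fun a => by
    rw [Pi.smul_apply, smul_eq_mul, mul_left_comm, hy a, mul_one]
  simp only [templateObj, hmargin, ← Finset.sum_mul, hq, one_mul, mulVec_smul,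
    dotProduct_smul, smul_dotProduct, smul_eq_mul]
  ring

end TemplateObj

theorem template_margin_general
    {r : ℕ}
    (N : Matrix (Fin r) (Fin r) ℝ) (hN : N.PosDef)
    (y : Fin r → ℝ) (hy : ∀ a, y a = 1 ∨ y a = -1)
    (pbar : ℝ) (hpbar : 0 < pbar) (Γ : ℝ) :
    ∃ lamΓ : ℝ, 0 < lamΓ ∧
      ∀ q : Fin r → ℝ, (∀ a, 0 ≤ q a) → (∑ a, q a) = 1 → (∀ a, pbar ≤ q a) →
        ∀ lam : ℝ, 0 < lam → lam < lamΓ →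
          ∀ g : Fin r → ℝ, IsMinOn (templateObj N y q lam) univ g →
            ∀ a, Γ < y a * g a := by
  have hNinv : (N⁻¹).PosSemidef := hN.inv.posSemidef
  have hy2 : ∀ a, y a * y a = 1 := fun a => by rcases hy a with h | h <;> simp [h]
  set ε := pbar * logLoss Γ / 2 with hε_def
  have hε : 0 < ε := by have := logLoss_pos Γ; positivity
  obtain ⟨T, hT⟩ := ((tendsto_order.1 tendsto_logLoss_atTop).2 ε hε).exists
  set C := T ^ 2 * (y ⬝ᵥ (N⁻¹ *ᵥ y))
  have hC : 0 ≤ C := mul_nonneg (sq_nonneg T) (hNinv.dotProduct_mulVec_nonneg y)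
  refine ⟨2 * ε / (C + 1), by positivity, fun q hq0 hq1 hqp lam hlam hlamΓ g hmin a => ?_⟩
  have hridge : lam / 2 * C < ε := by
    rw [lt_div_iff₀ (by positivity)] at hlamΓ
    nlinarith
  have hbound : pbar * logLoss (y a * g a) < pbar * logLoss Γ :=
    calc pbar * logLoss (y a * g a)
        ≤ q a * logLoss (y a * g a) := by gcongr; exacts [(logLoss_pos _).le, hqp a]
      _ ≤ templateObj N y q lam g := mul_logLoss_le_templateObj hq0 hlam.le hNinv g a
      _ ≤ templateObj N y q lam (T • y) := hmin (mem_univ _)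
      _ = logLoss T + lam / 2 * C := by rw [templateObj_smul_labels hy2 hq1, mul_assoc]
      _ < pbar * logLoss Γ := by rw [hε_def] at hT hridge; linarith
  exact logLoss_strictAnti.lt_iff_gt.1 (lt_of_mul_lt_mul_left hbound hpbar.le)

/-- Small-ridge template margin: for every `p̄ > 0` and `Γ ≥ 0` there is
`λ_Γ(p̄) > 0` (depending only on `Γ, p̄, N, y`) such that whenever `q` is in the
probability simplex with `q_a ≥ p̄` for all `a` and `0 < λ < λ_Γ(p̄)`, the unique
minimizer `g` of `Φ_{q,λ}` satisfies `min_a y_a·g_a > Γ`. -/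
theorem template_margin
    {r : ℕ} (hr : 0 < r)
    (N : Matrix (Fin r) (Fin r) ℝ) (hN : N.PosDef)
    (y : Fin r → ℝ) (hy : ∀ a, y a = 1 ∨ y a = -1)
    (pbar : ℝ) (hpbar : 0 < pbar) (Γ : ℝ) (hΓ : 0 ≤ Γ) :
    ∃ lamΓ : ℝ, 0 < lamΓ ∧
      ∀ q : Fin r → ℝ, (∀ a, 0 ≤ q a) → (∑ a, q a) = 1 → (∀ a, pbar ≤ q a) →
        ∀ lam : ℝ, 0 < lam → lam < lamΓ →
          ∀ g : Fin r → ℝ, IsMinOn (templateObj N y q lam) univ g →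
            ∀ a, Γ < y a * g a :=
  template_margin_general N hN y hy pbar hpbar Γ
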